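/- arXiv:1806.07065 — 3 statements merged into one kernel-verified Lean document; each statement's English description precedes it below -/
import Mathlib

section
/- For 2×2 Hermitian matrices X and Y, the bilinear form (X,Y) ↦ -(1/2)·trace(X e₂ Y e₂), where e₂ = [[0,i],[-i,0]], corresponds under the identification ι to the Lorentz-Minkowski inner product on ℝ⁴₁; in particular it is symmetric, real-valued, and its associated quadratic form equals -det. -/
open Matrix Complex ComplexConjugate

noncomputable def iota (x : Fin 4 → ℝ) : Matrix (Fin 2) (Fin 2) ℂ :=
  !![(x 0 : ℂ) + (x 3 : ℂ), (x 1 : ℂ) + Complex.I * (x 2 : ℂ);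
     (x 1 : ℂ) - Complex.I * (x 2 : ℂ), (x 0 : ℂ) - (x 3 : ℂ)]

def mink (x y : Fin 4 → ℝ) : ℝ :=
  -(x 0 * y 0) + x 1 * y 1 + x 2 * y 2 + x 3 * y 3

noncomputable def e2 : Matrix (Fin 2) (Fin 2) ℂ :=
  !![0, Complex.I; -Complex.I, 0]

noncomputable def bil (X Y : Matrix (Fin 2) (Fin 2) ℂ) : ℂ :=
  -(1/2 : ℂ) * (X * e2 * Yᵀ * e2).trace

lemma bil_eq (X Y : Matrix (Fin 2) (Fin 2) ℂ) :
    bil X Y = -(1/2 : ℂ) * (X 0 0 * Y 1 1 + X 1 1 * Y 0 0 - X 0 1 * Y 1 0 - X 1 0 * Y 0 1) := by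
  simp [bil, e2, Matrix.trace_fin_two, Matrix.mul_apply, Fin.sum_univ_succ]
  ring_nf
  simp [Complex.I_sq]
  ring

/-- The bilinear form `(X,Y) ↦ -(1/2)·trace(X e₂ Y e₂)` on Hermitian matrices
corresponds under `ι` to the Lorentz–Minkowski inner product on `ℝ⁴₁`;
in particular it is symmetric, real-valued on Hermitian matrices, and its
associated quadratic form equals `-det`. -/
theorem bilinear_form_is_minkowski :
    (∀ x y : Fin 4 → ℝ, bil (iota x) (iota y) = (mink x y : ℂ)) ∧
    (∀ X Y : Matrix (Fin 2) (Fin 2) ℂ, Xᴴ = X → Yᴴ = Y →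
      bil X Y = bil Y X ∧ (bil X Y).im = 0) ∧
    (∀ X : Matrix (Fin 2) (Fin 2) ℂ, Xᴴ = X → bil X X = -X.det) := by
  refine ⟨fun x y => ?_, fun X Y hX hY => ⟨by rw [bil_eq, bil_eq]; ring, ?_⟩,
    fun X hX => by rw [bil_eq, Matrix.det_fin_two]; ring⟩
  · rw [bil_eq]
    simp [iota, mink]
    ring_nf
    simp [Complex.I_sq]
  · have h00 : ((X 0 0).im : ℝ) = 0 := by
      have := congrFun (congrFun hX 0) 0
      simpa [Matrix.conjTranspose_apply, Complex.conj_eq_iff_im] using this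
    have h11 : ((X 1 1).im : ℝ) = 0 := by
      have := congrFun (congrFun hX 1) 1
      simpa [Matrix.conjTranspose_apply, Complex.conj_eq_iff_im] using this
    have k00 : ((Y 0 0).im : ℝ) = 0 := by
      have := congrFun (congrFun hY 0) 0
      simpa [Matrix.conjTranspose_apply, Complex.conj_eq_iff_im] using this
    have k11 : ((Y 1 1).im : ℝ) = 0 := by
      have := congrFun (congrFun hY 1) 1
      simpa [Matrix.conjTranspose_apply, Complex.conj_eq_iff_im] using this
    have h10 : X 1 0 = conj (X 0 1) := (congrFun (congrFun hX 1) 0).symm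
    have k10 : Y 1 0 = conj (Y 0 1) := (congrFun (congrFun hY 1) 0).symm
    rw [bil_eq]
    simp [h10, k10, Complex.mul_im, h00, h11, k00, k11]
    ring
end

section
/- Let g = A e₃ A* with A' = AD, D = [[0,α],[β,0]], α,β holomorphic and nonvanishing, and define the vector field η_d = 1/√(αβ), i.e., the directional derivative η_d g = (1/√(αβ)) g' + (1/√(ᾱβ̄)) g_z̄. Then on the singular set {|α|² = |β|²}, η_d g = 0; that is, 1/√(αβ) is a null direction of g along its singular set. -/
open Matrix Complex ComplexConjugate

def e3 : Matrix (Fin 2) (Fin 2) ℂ := !![1, 0; 0, -1]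

/-- For `g = Ae₃Aᴴ` with `g' = ADe₃Aᴴ`, `g_z̄ = Ae₃DᴴAᴴ`, `D = [[0,α],[β,0]]`,
and `s = √(αβ)` (any holomorphic branch, `s² = αβ`, `s ≠ 0`), on the singular set
`{|α|² = |β|²}` the directional derivative
`η_d g = (1/s) g' + (1/conj s) g_z̄` vanishes: `1/√(αβ)` is a null direction. -/
theorem eta_d_null_direction (A : Matrix (Fin 2) (Fin 2) ℂ) (α β s : ℂ)
    (hs : s ^ 2 = α * β) (hs0 : s ≠ 0)
    (hsing : α * conj α = β * conj β) :
    s⁻¹ • (A * !![0, α; β, 0] * e3 * Aᴴ)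
      + (conj s)⁻¹ • (A * e3 * (!![0, α; β, 0])ᴴ * Aᴴ) = 0 := by
  have hαβ : Complex.normSq α = Complex.normSq β := by
    have h := hsing
    rw [Complex.mul_conj, Complex.mul_conj] at h
    exact_mod_cast h
  have hs2 : Complex.normSq s = Complex.normSq β := by
    have h : (Complex.normSq s) ^ 2 = (Complex.normSq β) ^ 2 := by
      have h2 := congrArg Complex.normSq hs
      simpa [sq, Complex.normSq_mul, hαβ] using h2
    nlinarith [Complex.normSq_nonneg s, Complex.normSq_nonneg β]
  have hss : s * conj s = β * conj β := by
    rw [Complex.mul_conj, Complex.mul_conj]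
    exact_mod_cast hs2
  have hcs0 : (conj s : ℂ) ≠ 0 := by
    simpa using hs0
  have key1 : conj s * α = s * conj β := by
    apply mul_left_cancel₀ hs0
    linear_combination α * hss - conj β * hs
  have key2 : conj s * β = s * conj α := by
    apply mul_left_cancel₀ hs0
    linear_combination β * hss - conj α * hs - β * hsing
  have hD : (!![0, α; β, 0])ᴴ = !![0, conj β; conj α, 0] := by
    ext i j
    fin_cases i <;> fin_cases j <;> simp [Matrix.conjTranspose_apply]
  have hM : s⁻¹ • (!![0, α; β, 0] * e3) + (conj s)⁻¹ • (e3 * (!![0, α; β, 0])ᴴ) = 0 := by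
    rw [hD]
    ext i j
    fin_cases i <;> fin_cases j <;>
      simp [e3, Matrix.mul_apply, Fin.sum_univ_two] <;>
      field_simp
    · linear_combination -key1
    · linear_combination key2
  calc s⁻¹ • (A * !![0, α; β, 0] * e3 * Aᴴ)
        + (conj s)⁻¹ • (A * e3 * (!![0, α; β, 0])ᴴ * Aᴴ)
      = A * (s⁻¹ • (!![0, α; β, 0] * e3) + (conj s)⁻¹ • (e3 * (!![0, α; β, 0])ᴴ)) * Aᴴ := by
        simp only [Matrix.mul_add, Matrix.add_mul, Matrix.mul_smul, Matrix.smul_mul,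
          Matrix.mul_assoc]
    _ = 0 := by rw [hM]; simp
end

section
/- Let h be holomorphic and suppose at a point p one has Re(h(p)) = 0 and Im(e^{-h/2}h')(p) = 0 with h'(p) ≠ 0. Then along any curve γ(t) in {Re h = 0} with γ(0) = p and velocity γ̇ = -i·conj(h') (tangent to the level set of Re h), one has d/dt[Im(e^{-h/2}h')(γ(t))]|_{t=0} = -(e^{-h/2}h')(p) · Re(e^{-h}(h'' - (1/2)(h')²))(p). -/
/-!
At `p` the value `a = h p` is purely imaginary and `w = e^{-a/2} h'(p)` is real, which together
give `conj h'(p) = e^{-a} h'(p)`; so `γ̇(0) = -i e^{-a} h'(p)`. Since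
`(e^{-h/2} h')' = e^{-h/2} (h'' - h'^2/2)`, the chain rule makes the derivative of
`e^{-h/2} h' ∘ γ` at `0` equal to `-i · w · e^{-a} (h'' - h'^2/2)(p)`, and as `w` is real its
imaginary part is `-w · Re(e^{-a} (h'' - h'^2/2)(p))`.
-/

open ComplexConjugate

namespace Complex

theorem conj_eq_neg_of_re_eq_zero {z : ℂ} (hz : z.re = 0) : conj z = -z :=
  ext (by simp [hz]) (by simp)

theorem conj_eq_exp_neg_mul_of_im_exp_neg_half_mul_eq_zero {a b : ℂ} (ha : a.re = 0)
    (hab : (exp (-a / 2) * b).im = 0) : conj b = exp (-a) * b := by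
  have hreal : exp (a / 2) * conj b = exp (-a / 2) * b := by
    rw [← conj_eq_iff_im.mpr hab, map_mul, ← exp_conj, map_div₀, map_neg,
      conj_eq_neg_of_re_eq_zero ha, neg_neg, map_ofNat]
  calc conj b = exp (-a / 2) * (exp (a / 2) * conj b) := by
        rw [← mul_assoc, ← exp_add]; ring_nf; simp
    _ = exp (-a) * b := by
        rw [hreal, ← mul_assoc, ← exp_add]; ring_nf

theorem im_neg_I_mul_mul_of_im_eq_zero {z : ℂ} (hz : z.im = 0) (u : ℂ) :
    ((-I * z * u).im : ℂ) = -z * u.re := by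
  conv_rhs => rw [← re_add_im z, hz]
  simp [mul_re, mul_im, hz]

end Complex

theorem HasDerivAt.ofReal_im {g : ℝ → ℂ} {g' : ℂ} {t : ℝ} (hg : HasDerivAt g g' t) :
    HasDerivAt (fun s => ((g s).im : ℂ)) (g'.im : ℂ) t :=
  (Complex.imCLM.hasFDerivAt.comp_hasDerivAt t hg).ofReal_comp

theorem AnalyticAt.hasDerivAt_exp_neg_half_mul_deriv {h : ℂ → ℂ} {p : ℂ}
    (hh : AnalyticAt ℂ h p) :
    HasDerivAt (fun z => Complex.exp (-h z / 2) * deriv h z)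
      (Complex.exp (-h p / 2) * (deriv (deriv h) p - 1 / 2 * deriv h p ^ 2)) p := by
  have hexp : HasDerivAt (fun z => Complex.exp (-h z / 2))
      (Complex.exp (-h p / 2) * (-deriv h p / 2)) p :=
    (hh.differentiableAt.hasDerivAt.fun_neg.div_const 2).cexp
  exact (hexp.fun_mul hh.deriv.differentiableAt.hasDerivAt).congr_deriv (by ring)

theorem swallowtail_key_computation_general (h : ℂ → ℂ) (hh : Differentiable ℂ h)
    (p : ℂ) (γ : ℝ → ℂ) (hγ : Differentiable ℝ γ) (hγ0 : γ 0 = p)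
    (hvel : ∀ t, deriv γ t = -Complex.I * conj (deriv h (γ t)))
    (hRe : (h p).re = 0)
    (hIm : (Complex.exp (-(h p) / 2) * deriv h p).im = 0) :
    (deriv (fun t => (Complex.exp (-(h (γ t)) / 2) * deriv h (γ t)).im) 0 : ℂ)
      = -(Complex.exp (-(h p) / 2) * deriv h p) *
          ((Complex.exp (-(h p)) *
            (deriv (deriv h) p - (1/2) * (deriv h p) ^ 2)).re : ℂ) := by
  have hconj := Complex.conj_eq_exp_neg_mul_of_im_exp_neg_half_mul_eq_zero hRe hIm
  have hγ' : HasDerivAt γ (-Complex.I * (Complex.exp (-h p) * deriv h p)) 0 := by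
    rw [← hconj, ← hγ0, ← hvel]
    exact hγ.differentiableAt.hasDerivAt
  have hcomp : HasDerivAt (fun t => Complex.exp (-h (γ t) / 2) * deriv h (γ t))
      (Complex.exp (-h p / 2) * (deriv (deriv h) p - 1 / 2 * deriv h p ^ 2) *
        (-Complex.I * (Complex.exp (-h p) * deriv h p))) 0 :=
    (hh.analyticAt p).hasDerivAt_exp_neg_half_mul_deriv.comp_of_eq 0 hγ' hγ0.symm
  rw [hcomp.ofReal_im.deriv, ← Complex.im_neg_I_mul_mul_of_im_eq_zero hIm]
  congr 2
  ring

/-- Key computation in the swallowtail criterion: if `Re h(p) = 0`,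
`Im(e^{-h/2}h')(p) = 0`, `h'(p) ≠ 0`, and `γ` is a curve in `{Re h = 0}` with
`γ(0) = p` and velocity `γ̇ = -i·conj(h')`, then
`d/dt[Im(e^{-h/2}h')(γ(t))]|₀ = -(e^{-h/2}h')(p)·Re(e^{-h}(h'' - (1/2)(h')²))(p)`. -/
theorem swallowtail_key_computation (h : ℂ → ℂ) (hh : Differentiable ℂ h)
    (p : ℂ) (γ : ℝ → ℂ) (hγ : Differentiable ℝ γ) (hγ0 : γ 0 = p)
    (hγsing : ∀ t, (h (γ t)).re = 0)
    (hvel : ∀ t, deriv γ t = -Complex.I * conj (deriv h (γ t)))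
    (hRe : (h p).re = 0)
    (hIm : (Complex.exp (-(h p) / 2) * deriv h p).im = 0)
    (hne : deriv h p ≠ 0) :
    (deriv (fun t => (Complex.exp (-(h (γ t)) / 2) * deriv h (γ t)).im) 0 : ℂ)
      = -(Complex.exp (-(h p) / 2) * deriv h p) *
          ((Complex.exp (-(h p)) *
            (deriv (deriv h) p - (1/2) * (deriv h p) ^ 2)).re : ℂ) :=
  swallowtail_key_computation_general h hh p γ hγ hγ0 hvel hRe hIm
end
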